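/- The set of fixed points of the twist map η inside the icosian ring 𝕀 is exactly the lattice L = ℤ-span of (1,0,0,0), ½(−1,1,1,1), (0,−1,0,0), ½(0,1,τ−1,−τ): that is, {x ∈ 𝕀 : η(x) = x} = L. -/

import Mathlib

open Polynomial Quaternion

noncomputable section

set_option maxRecDepth 8000
set_option synthInstance.maxHeartbeats 1000000
set_option maxHeartbeats 1000000

def f5 : ℚ[X] := X ^ 2 - C 5

instance f5_irred : Fact (Irreducible f5) := ⟨by
  unfold f5
  apply X_pow_sub_C_irreducible_of_prime Nat.prime_two
  intro b hb
  have h5 : Irrational (Real.sqrt 5) := (Nat.prime_five).irrational_sqrt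
  have hb' : ((b : ℝ)) ^ 2 = 5 := by exact_mod_cast congrArg (fun q : ℚ => (q : ℝ)) hb
  have heq : Real.sqrt 5 = |(b : ℝ)| := by
    rw [← hb', Real.sqrt_sq_eq_abs]
  rw [heq] at h5
  exact h5 ⟨|b|, by push_cast; ring⟩⟩

abbrev K : Type := AdjoinRoot f5

instance : Field K := inferInstance
instance : SMul K (Quaternion K) := inferInstance
instance : Algebra K (Quaternion K) := inferInstance

def sqrt5 : K := AdjoinRoot.root f5

lemma sqrt5_sq : sqrt5 ^ 2 = 5 := by
  have h : AdjoinRoot.mk f5 f5 = 0 := AdjoinRoot.mk_self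
  have e : AdjoinRoot.mk f5 f5 = sqrt5 ^ 2 - 5 := by
    show AdjoinRoot.mk f5 (X ^ 2 - C 5) = _
    rw [map_sub, map_pow, AdjoinRoot.mk_X, AdjoinRoot.mk_C]
    simp [sqrt5]
  rw [e, sub_eq_zero] at h
  exact h

def conjK : K →+* K :=
  AdjoinRoot.lift (algebraMap ℚ K) (-sqrt5) (by
    simp only [f5, eval₂_sub, eval₂_pow, eval₂_X, eval₂_C, sub_eq_zero]
    have h : (-sqrt5) ^ 2 = sqrt5 ^ 2 := by ring
    rw [h, sqrt5_sq]
    simp)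

def τ : K := (1 + sqrt5) / 2

abbrev ℍK := Quaternion K

def twist (x : ℍK) : ℍK := ⟨conjK x.re, conjK x.imI, conjK x.imK, conjK x.imJ⟩

def icoB : Fin 4 → ℍK :=
  ![1, ⟨0,1,0,0⟩, ⟨1/2,1/2,1/2,1/2⟩, ⟨(1-τ)/2, τ/2, 0, 1/2⟩]

def Ico : AddSubgroup ℍK :=
  AddSubgroup.closure (Set.range icoB ∪ Set.range fun i => τ • icoB i)

def lB : Fin 4 → ℍK :=
  ![1, ⟨-(1/2),1/2,1/2,1/2⟩, ⟨0,-1,0,0⟩, ⟨0,1/2,(τ-1)/2,-(τ/2)⟩]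

def LatA4 : AddSubgroup ℍK := AddSubgroup.closure (Set.range lB)

def LatATau : AddSubgroup ℍK :=
  AddSubgroup.closure (Set.range lB ∪ Set.range fun i => τ • lB i)


/-! Write an icosian as `∑ (cᵢ + dᵢ τ) • icoB i` with integers `cᵢ, dᵢ`. Twice each of its
coordinates then lies in `ℤ + ℤτ`, where the Galois conjugation acts by `a + bτ ↦ (a + b) - bτ`.
As `1, τ` are linearly independent over `ℚ`, the fixed-point equations `x₀' = x₀`, `x₁' = x₁`,
`x₃' = x₂` become integer linear equations forcing `d₀ = d₁ = 0`, `c₃ = d₂`, `d₃ = -2d₂`, and an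
icosian with such coefficients is an explicit integer combination of the generators of `L`.
Conversely these generators are fixed icosians. -/

lemma conjK_sqrt5 : conjK sqrt5 = -sqrt5 := AdjoinRoot.lift_root _

lemma conjK_tau : conjK τ = 1 - τ := by
  rw [τ, map_div₀, map_add, map_one, conjK_sqrt5, map_ofNat]
  ring

lemma tau_sq : τ ^ 2 = τ + 1 := by
  rw [τ]
  linear_combination sqrt5_sq / 4

lemma conjK_intCast_add_mul_tau (a b : ℤ) :
    conjK (a + b * τ) = ((a + b : ℤ) : K) + ((-b : ℤ) : K) * τ := by
  rw [map_add, map_mul, map_intCast, map_intCast, conjK_tau]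
  push_cast
  ring

lemma tau_not_mem_range_ratCast : τ ∉ Set.range ((↑) : ℚ → K) := by
  rintro ⟨q, hq⟩
  refine pow_ne_of_irreducible_X_pow_sub_C (f5_irred.out) dvd_rfl (by norm_num) (2 * q - 1) ?_
  have hsqrt5 : sqrt5 = ((2 * q - 1 : ℚ) : K) := by
    push_cast
    rw [hq, τ]
    ring
  exact_mod_cast hsqrt5 ▸ sqrt5_sq

lemma eq_and_eq_of_intCast_add_mul_eq {F : Type*} [Field F] [CharZero F] {t : F}
    (ht : t ∉ Set.range ((↑) : ℚ → F)) {a b a' b' : ℤ} (h : (a : F) + b * t = a' + b' * t) :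
    a = a' ∧ b = b' := by
  by_cases hb : b = b'
  · subst hb
    exact ⟨by exact_mod_cast add_right_cancel h, rfl⟩
  · refine absurd ⟨(a' - a) / (b - b'), ?_⟩ ht
    have : (b : F) - b' ≠ 0 := sub_ne_zero.2 (Int.cast_injective.ne hb)
    push_cast
    rw [div_eq_iff this]
    linear_combination -h

def icoComb (c d : Fin 4 → ℤ) : ℍK := ∑ i, ((c i : K) + d i * τ) • icoB i

lemma mem_Ico_iff {x : ℍK} : x ∈ Ico ↔ ∃ c d : Fin 4 → ℤ, x = icoComb c d := by
  have hsum (c d : Fin 4 → ℤ) :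
      ∑ j, Sum.elim c d j • Sum.elim icoB (fun i => τ • icoB i) j = icoComb c d := by
    simp [icoComb, Fintype.sum_sum_type, add_smul, mul_smul, Finset.sum_add_distrib,
      ← Int.cast_smul_eq_zsmul K]
  rw [Ico, ← Set.Sum.elim_range, AddSubgroup.mem_closure_range_iff_of_fintype]
  constructor
  · rintro ⟨a, rfl⟩
    exact ⟨a ∘ Sum.inl, a ∘ Sum.inr, by rw [← hsum, Sum.elim_comp_inl_inr]⟩
  · rintro ⟨c, d, rfl⟩
    exact ⟨Sum.elim c d, (hsum c d).symm⟩

section icoComb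

variable (c d : Fin 4 → ℤ)

lemma two_mul_re_icoComb : 2 * (icoComb c d).re =
    ((2 * c 0 + c 2 + c 3 - d 3 : ℤ) : K) + ((2 * d 0 + d 2 - c 3 : ℤ) : K) * τ := by
  simp only [icoComb, Fin.sum_univ_four, Quaternion.re_add, Quaternion.re_smul, smul_eq_mul]
  simp only [icoB, Matrix.cons_val, Quaternion.re_one]
  push_cast
  linear_combination (-d 3 : K) * tau_sq

lemma two_mul_imI_icoComb : 2 * (icoComb c d).imI =
    ((2 * c 1 + c 2 + d 3 : ℤ) : K) + ((2 * d 1 + d 2 + c 3 + d 3 : ℤ) : K) * τ := by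
  simp only [icoComb, Fin.sum_univ_four, Quaternion.imI_add, Quaternion.imI_smul, smul_eq_mul]
  simp only [icoB, Matrix.cons_val, Quaternion.imI_one]
  push_cast
  linear_combination (d 3 : K) * tau_sq

lemma two_mul_imJ_icoComb : 2 * (icoComb c d).imJ = ((c 2 : ℤ) : K) + ((d 2 : ℤ) : K) * τ := by
  simp only [icoComb, Fin.sum_univ_four, Quaternion.imJ_add, Quaternion.imJ_smul, smul_eq_mul]
  simp only [icoB, Matrix.cons_val, Quaternion.imJ_one]
  ring

lemma two_mul_imK_icoComb :
    2 * (icoComb c d).imK = ((c 2 + c 3 : ℤ) : K) + ((d 2 + d 3 : ℤ) : K) * τ := by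
  simp only [icoComb, Fin.sum_univ_four, Quaternion.imK_add, Quaternion.imK_smul, smul_eq_mul]
  simp only [icoB, Matrix.cons_val, Quaternion.imK_one]
  push_cast
  ring

end icoComb

lemma add_eq_and_neg_eq_of_conjK_eq {a b a' b' : ℤ} (h : conjK (a + b * τ) = a' + b' * τ) :
    a + b = a' ∧ -b = b' :=
  eq_and_eq_of_intCast_add_mul_eq tau_not_mem_range_ratCast (conjK_intCast_add_mul_tau a b ▸ h)

lemma coeffs_eq_of_twist_icoComb_eq_self {c d : Fin 4 → ℤ}
    (h : twist (icoComb c d) = icoComb c d) : d 0 = 0 ∧ d 1 = 0 ∧ c 3 = d 2 ∧ d 3 = -2 * d 2 := by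
  have hre : conjK (2 * (icoComb c d).re) = 2 * (icoComb c d).re := by
    rw [map_mul, map_ofNat]; exact congrArg (2 * ·.re) h
  have himI : conjK (2 * (icoComb c d).imI) = 2 * (icoComb c d).imI := by
    rw [map_mul, map_ofNat]; exact congrArg (2 * ·.imI) h
  have himJ : conjK (2 * (icoComb c d).imK) = 2 * (icoComb c d).imJ := by
    rw [map_mul, map_ofNat]; exact congrArg (2 * ·.imJ) h
  rw [two_mul_re_icoComb] at hre
  rw [two_mul_imI_icoComb] at himI
  rw [two_mul_imK_icoComb, two_mul_imJ_icoComb] at himJ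
  have := add_eq_and_neg_eq_of_conjK_eq hre
  have := add_eq_and_neg_eq_of_conjK_eq himI
  have := add_eq_and_neg_eq_of_conjK_eq himJ
  omega

lemma icoComb_mem_LatA4 {c d : Fin 4 → ℤ} (hd0 : d 0 = 0) (hd1 : d 1 = 0) (hc3 : c 3 = d 2)
    (hd3 : d 3 = -2 * d 2) : icoComb c d ∈ LatA4 := by
  rw [LatA4, AddSubgroup.mem_closure_range_iff_of_fintype]
  refine ⟨![c 0 + c 2 + 2 * d 2, c 2 + d 2, 2 * d 2 - c 1, d 2], ?_⟩
  ext <;>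
    simp only [icoComb, Fin.sum_univ_four, ← Int.cast_smul_eq_zsmul K, Quaternion.re_add,
      Quaternion.imI_add, Quaternion.imJ_add, Quaternion.imK_add, Quaternion.re_smul,
      Quaternion.imI_smul, Quaternion.imJ_smul, Quaternion.imK_smul, smul_eq_mul] <;>
    simp [icoB, lB, hd0, hd1, hc3, hd3]
  · linear_combination (d 2 : K) * tau_sq
  · linear_combination (-d 2 : K) * tau_sq
  · ring
  · ring

lemma lB_mem_Ico (i : Fin 4) : lB i ∈ Ico := by
  rw [mem_Ico_iff]
  fin_cases i <;>
    [use ![1, 0, 0, 0], 0; use ![-1, 0, 1, 0], 0; use ![0, -1, 0, 0], 0;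
      use ![-1, 2, -1, 1], ![0, 0, 1, -2]] <;>
    ext <;>
      simp only [icoComb, Fin.sum_univ_four, Quaternion.re_add, Quaternion.imI_add,
        Quaternion.imJ_add, Quaternion.imK_add, Quaternion.re_smul, Quaternion.imI_smul,
        Quaternion.imJ_smul, Quaternion.imK_smul, smul_eq_mul] <;>
      simp [icoB, lB] <;> grind [tau_sq]

lemma twist_lB (i : Fin 4) : twist (lB i) = lB i := by
  fin_cases i <;> ext <;> simp [twist, lB, conjK_tau, map_ofNat] <;> ring

def twistAddHom : ℍK →+ ℍK where
  toFun := twist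
  map_zero' := by ext <;> exact map_zero conjK
  map_add' x y := by ext <;> exact map_add conjK _ _

/-- the fixed points of the twist map inside the icosian ring form
exactly the A₄ lattice L. -/
theorem twist_fixed_points_eq_L :
    {x : ℍK | x ∈ Ico ∧ twist x = x} = (LatA4 : Set ℍK) := by
  ext x
  refine ⟨fun ⟨hx, hfix⟩ => ?_, fun hx => ?_⟩
  · obtain ⟨c, d, rfl⟩ := mem_Ico_iff.1 hx
    obtain ⟨hd0, hd1, hc3, hd3⟩ := coeffs_eq_of_twist_icoComb_eq_self hfix
    exact icoComb_mem_LatA4 hd0 hd1 hc3 hd3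
  · have hle : LatA4 ≤ Ico ⊓ twistAddHom.eqLocus (AddMonoidHom.id ℍK) :=
      (AddSubgroup.closure_le _).2 fun _ ⟨i, hi⟩ => hi ▸ ⟨lB_mem_Ico i, twist_lB i⟩
    exact hle hx
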